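/- Let P ∈ ℝ^{n×n} be symmetric positive definite, R(x) ∈ ℝ^{m×m} symmetric positive definite, γ = 1, M(x) = R(x) + g(x)ᵀPg(x), u*(x) = −M(x)⁻¹ g(x)ᵀPf(x), Q(x) = xᵀPx − f(x)ᵀPf(x) + f(x)ᵀPg(x)M(x)⁻¹g(x)ᵀPf(x), and let x⁺ = f(x) + g(x)u*(x) be the closed-loop successor state. Then (x⁺)ᵀPx⁺ = xᵀPx − Q(x) − u*(x)ᵀR(x)u*(x); in particular (x⁺)ᵀPx⁺ ≤ xᵀPx − Q(x), so if Q is positive definite the value function V(x) = xᵀPx strictly decreases along closed-loop trajectories away from the origin. -/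

import Mathlib

/-!
The optimal control is `u* = -v` with `v = M⁻¹ gᵀ P f`, and `v` solves the normal equation
`(R + gᵀ P g) v = gᵀ P f`. Expanding the quadratic form at `x⁺ = f - g v` and replacing
`vᵀ gᵀ P g v` by `vᵀ gᵀ P f - vᵀ R v` completes the square; what remains are the terms defining `Q`,
and `R ≻ 0` makes the last term `-u*ᵀ R u*` nonpositive.
-/

open Matrix

section QuadraticForm

variable {ι κ α : Type*} [Fintype ι] [Fintype κ] [CommRing α] {P : Matrix ι ι α}

theorem dotProduct_mulVec_mulVec_of_transpose_eq (hP : Pᵀ = P) (A : Matrix ι κ α) (a : ι → α)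
    (v : κ → α) : a ⬝ᵥ (P *ᵥ (A *ᵥ v)) = (Aᵀ *ᵥ (P *ᵥ a)) ⬝ᵥ v := by
  rw [mulVec_mulVec, dotProduct_mulVec, ← mulVec_transpose, transpose_mul, hP, ← mulVec_mulVec]

theorem dotProduct_mulVec_comm_of_transpose_eq (hP : Pᵀ = P) (a b : ι → α) :
    a ⬝ᵥ (P *ᵥ b) = b ⬝ᵥ (P *ᵥ a) := by
  rw [dotProduct_mulVec, ← mulVec_transpose, hP, dotProduct_comm]

theorem dotProduct_mulVec_sub_of_normal_eq (hP : Pᵀ = P) (G : Matrix ι κ α) (W : Matrix κ κ α)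
    (a : ι → α) {v : κ → α} (hv : (W + Gᵀ * P * G) *ᵥ v = Gᵀ *ᵥ (P *ᵥ a)) :
    (a - G *ᵥ v) ⬝ᵥ (P *ᵥ (a - G *ᵥ v))
      = a ⬝ᵥ (P *ᵥ a) - a ⬝ᵥ (P *ᵥ (G *ᵥ v)) - v ⬝ᵥ (W *ᵥ v) := by
  have cross : (G *ᵥ v) ⬝ᵥ (P *ᵥ a) = a ⬝ᵥ (P *ᵥ (G *ᵥ v)) :=
    dotProduct_mulVec_comm_of_transpose_eq hP _ _
  have square : (G *ᵥ v) ⬝ᵥ (P *ᵥ (G *ᵥ v)) = a ⬝ᵥ (P *ᵥ (G *ᵥ v)) - v ⬝ᵥ (W *ᵥ v) := by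
    have hGPG : (Gᵀ * P * G) *ᵥ v = Gᵀ *ᵥ (P *ᵥ a) - W *ᵥ v := by
      rw [← hv, add_mulVec, add_sub_cancel_left]
    rw [dotProduct_mulVec_mulVec_of_transpose_eq hP, dotProduct_mulVec_mulVec_of_transpose_eq hP,
      mulVec_mulVec, mulVec_mulVec, hGPG, sub_dotProduct, dotProduct_comm (W *ᵥ v)]
  simp only [mulVec_sub, sub_dotProduct, dotProduct_sub]
  rw [cross, square]
  ring

end QuadraticForm

/-- Remark 1 made precise: for γ = 1, the closed-loop successor state
`x⁺ = f x + g x u* x` satisfies `(x⁺)ᵀPx⁺ = xᵀPx - Q x - u*ᵀR u*`, hence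
`(x⁺)ᵀPx⁺ ≤ xᵀPx - Q x`; if `Q` is positive definite, `V x = xᵀPx` strictly
decreases along closed-loop trajectories away from the origin. -/
theorem discrete_lyapunov_decrease
    {n m : ℕ} (P : Matrix (Fin n) (Fin n) ℝ) (hP : P.PosDef)
    (f : (Fin n → ℝ) → (Fin n → ℝ))
    (g : (Fin n → ℝ) → Matrix (Fin n) (Fin m) ℝ)
    (R : (Fin n → ℝ) → Matrix (Fin m) (Fin m) ℝ)
    (hR : ∀ x, (R x).PosDef)
    (M : (Fin n → ℝ) → Matrix (Fin m) (Fin m) ℝ)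
    (hM : ∀ x, M x = R x + (g x)ᵀ * P * g x)
    (ustar : (Fin n → ℝ) → (Fin m → ℝ))
    (hu : ∀ x, ustar x = -((M x)⁻¹ *ᵥ ((g x)ᵀ *ᵥ (P *ᵥ f x))))
    (Q : (Fin n → ℝ) → ℝ)
    (hQ : ∀ x, Q x = x ⬝ᵥ (P *ᵥ x) - f x ⬝ᵥ (P *ᵥ f x)
        + f x ⬝ᵥ (P *ᵥ (g x *ᵥ ((M x)⁻¹ *ᵥ ((g x)ᵀ *ᵥ (P *ᵥ f x))))))
    (xplus : (Fin n → ℝ) → (Fin n → ℝ))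
    (hxplus : ∀ x, xplus x = f x + g x *ᵥ ustar x) :
    (∀ x : Fin n → ℝ,
        xplus x ⬝ᵥ (P *ᵥ xplus x)
          = x ⬝ᵥ (P *ᵥ x) - Q x - ustar x ⬝ᵥ (R x *ᵥ ustar x)) ∧
    (∀ x : Fin n → ℝ, xplus x ⬝ᵥ (P *ᵥ xplus x) ≤ x ⬝ᵥ (P *ᵥ x) - Q x) ∧
    ((∀ x : Fin n → ℝ, x ≠ 0 → 0 < Q x) →
      ∀ x : Fin n → ℝ, x ≠ 0 → xplus x ⬝ᵥ (P *ᵥ xplus x) < x ⬝ᵥ (P *ᵥ x)) := by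
  have hPsymm : Pᵀ = P := hP.isHermitian
  have hMunit : ∀ x, IsUnit (M x).det := fun x => by
    have hgPg : ((g x)ᵀ * P * g x).PosSemidef := hP.posSemidef.conjTranspose_mul_mul_same (g x)
    rw [← isUnit_iff_isUnit_det, hM]
    exact ((hR x).add_posSemidef hgPg).isUnit
  have identity : ∀ x, xplus x ⬝ᵥ (P *ᵥ xplus x)
      = x ⬝ᵥ (P *ᵥ x) - Q x - ustar x ⬝ᵥ (R x *ᵥ ustar x) := by
    intro x
    have normal : (R x + (g x)ᵀ * P * g x) *ᵥ ((M x)⁻¹ *ᵥ ((g x)ᵀ *ᵥ (P *ᵥ f x)))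
        = (g x)ᵀ *ᵥ (P *ᵥ f x) := by
      rw [← hM, mulVec_mulVec, mul_nonsing_inv _ (hMunit x), one_mulVec]
    rw [hxplus, hu, hQ, mulVec_neg, ← sub_eq_add_neg,
      dotProduct_mulVec_sub_of_normal_eq hPsymm _ _ _ normal, mulVec_neg, neg_dotProduct,
      dotProduct_neg, neg_neg]
    ring
  have hRnonneg : ∀ x, 0 ≤ ustar x ⬝ᵥ (R x *ᵥ ustar x) := fun x =>
    (hR x).posSemidef.dotProduct_mulVec_nonneg _
  refine ⟨identity, fun x => ?_, fun hQpos x hx => ?_⟩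
  · linarith [identity x, hRnonneg x]
  · linarith [identity x, hRnonneg x, hQpos x hx]
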